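/- arXiv:2404.09448 — 4 statements merged into one kernel-verified Lean document; each statement's English description precedes it below -/
import Mathlib

section
/- If A is an m×n real matrix, b ∈ ℝ^m, x_* satisfies A x_* = b on rows indexed by a subset V, and x_{k+1} = x_k + A_V^† (b_V - A_V x_k) where A_V is the row submatrix indexed by V and A_V^† its Moore–Penrose pseudoinverse, then ‖x_{k+1} - x_*‖² = ‖x_k - x_*‖² - ‖A_V^† A_V (x_k - x_*)‖². -/
open Matrix

/-- One-step MRBK update identity. `B` plays the role of the row
submatrix `A_V`, `bV` the corresponding subvector of `b`, and `P` is the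
Moore–Penrose pseudoinverse of `B` (characterized by the four Penrose
equations). Norms are squared Euclidean norms. -/
theorem mrbk_step_identity {p n : ℕ}
    (B : Matrix (Fin p) (Fin n) ℝ) (P : Matrix (Fin n) (Fin p) ℝ)
    (hP1 : B * P * B = B) (hP2 : P * B * P = P)
    (hP3 : (B * P)ᵀ = B * P) (hP4 : (P * B)ᵀ = P * B)
    (bV : Fin p → ℝ) (xs xk xk1 : Fin n → ℝ)
    (hxs : B.mulVec xs = bV)
    (hup : xk1 = xk + P.mulVec (bV - B.mulVec xk)) :
    ∑ j, (xk1 j - xs j) ^ 2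
      = ∑ j, (xk j - xs j) ^ 2 - ∑ j, ((P * B).mulVec (xk - xs) j) ^ 2 := by
  set Q := P * B with hQdef
  obtain ⟨e, he⟩ : ∃ e : Fin n → ℝ, e = xk - xs := ⟨_, rfl⟩
  rw [show xk - xs = e from he.symm]
  have hQ2 : Q * Q = Q := by
    rw [hQdef, Matrix.mul_assoc P B (P * B), ← Matrix.mul_assoc B P B, hP1]
  have hx1 : ∀ j, xk1 j - xs j = e j - Q.mulVec e j := by
    intro j
    have h1 : bV - B.mulVec xk = B.mulVec (xs - xk) := by
      rw [← hxs, Matrix.mulVec_sub]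
    have : xk1 = xk + P.mulVec (B.mulVec (xs - xk)) := by rw [hup, h1]
    rw [this]
    have h2 : P.mulVec (B.mulVec (xs - xk)) = Q.mulVec (xs - xk) := by
      rw [hQdef, Matrix.mulVec_mulVec]
    rw [h2]
    have h3 : Q.mulVec (xs - xk) = - Q.mulVec e := by
      rw [he, ← Matrix.mulVec_neg, neg_sub]
    rw [h3]
    simp [he]
    ring
  have hsq : ∀ v : Fin n → ℝ, ∑ j, v j ^ 2 = v ⬝ᵥ v := by
    intro v; simp [dotProduct, sq]
  have key : Q.mulVec e ⬝ᵥ Q.mulVec e = e ⬝ᵥ Q.mulVec e := by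
    rw [Matrix.dotProduct_mulVec, ← Matrix.mulVec_transpose, hP4]
    rw [Matrix.mulVec_mulVec, hQ2, dotProduct_comm]
  calc ∑ j, (xk1 j - xs j) ^ 2
      = ∑ j, (e j - Q.mulVec e j) ^ 2 := by simp_rw [hx1]
    _ = (e - Q.mulVec e) ⬝ᵥ (e - Q.mulVec e) := by
        rw [hsq]; rfl
    _ = e ⬝ᵥ e - Q.mulVec e ⬝ᵥ Q.mulVec e := by
        rw [sub_dotProduct, dotProduct_sub, dotProduct_sub, key,
          dotProduct_comm (Q.mulVec e) e]
        ring
    _ = ∑ j, (xk j - xs j) ^ 2 - ∑ j, (Q.mulVec e j) ^ 2 := by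
        rw [he, hsq, hsq]; rfl
end

section
/- (One-step MRBK contraction) Let Ax = b be consistent, V₁,…,V_t a partition of {1,…,m} with σ_max(A_{V_i})² ≤ β for all i, and let x_* satisfy A x_* = b. If i₀ = argmax_i ‖b_{V_i} - A_{V_i} x₀‖₂² and x₁ = x₀ + A_{V_{i₀}}^† (b_{V_{i₀}} - A_{V_{i₀}} x₀), then ‖x₁ - x_*‖₂² ≤ (1 - σ_min(A)²/(β t)) ‖x₀ - x_*‖₂², where σ_min(A) is the smallest nonzero singular value of A and x₀ - x_* lies in the row space of A. -/
open Matrix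

/-- The squared smallest nonzero singular value of `A`, realized as the
infimum of the Rayleigh quotients `‖Au‖²/‖u‖²` over nonzero vectors `u` in the
row space of `A` (range of `Aᵀ`); squared Euclidean norms throughout. -/
noncomputable def sigmaMinSq {m n : ℕ} (A : Matrix (Fin m) (Fin n) ℝ) : ℝ :=
  sInf {c | ∃ w : Fin m → ℝ, (Aᵀ).mulVec w ≠ 0 ∧
    c = (∑ i, (A.mulVec ((Aᵀ).mulVec w) i) ^ 2) / (∑ l, ((Aᵀ).mulVec w l) ^ 2)}

/-- The row submatrix of `A` indexed by the finite set `V i`. -/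
def rowSub {m n t : ℕ} (A : Matrix (Fin m) (Fin n) ℝ)
    (V : Fin t → Finset (Fin m)) (i : Fin t) :
    Matrix {j // j ∈ V i} (Fin n) ℝ :=
  A.submatrix (fun j => j.1) id

/-- one-step MRBK contraction. For a consistent system
`A x_* = b`, a partition `V₁,…,V_t` of the rows with `σ_max(A_{V_i})² ≤ β`
(stated as `‖A_{V_i} u‖₂² ≤ β‖u‖₂²`), `x₀ - x_* ∈ range(Aᵀ)`, the maximal
residual block `i₀`, and the update `x₁ = x₀ + A_{V_{i₀}}† (b_{V_{i₀}} -
A_{V_{i₀}} x₀)` with `P` the Moore–Penrose pseudoinverse (Penrose equations),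
we have `‖x₁ - x_*‖₂² ≤ (1 - σ_min(A)²/(β t)) ‖x₀ - x_*‖₂²`. -/
theorem mrbk_one_step_contraction {m n t : ℕ} (ht : 0 < t)
    (A : Matrix (Fin m) (Fin n) ℝ) (b : Fin m → ℝ) (xs x0 x1 : Fin n → ℝ)
    (β : ℝ)
    (V : Fin t → Finset (Fin m))
    (hdisj : Pairwise fun i j => Disjoint (V i) (V j))
    (hcover : ∀ r : Fin m, ∃ i, r ∈ V i)
    (hβ : ∀ i, ∀ u : Fin n → ℝ,
      ∑ r ∈ V i, (A.mulVec u r) ^ 2 ≤ β * ∑ l, (u l) ^ 2)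
    (hb : A.mulVec xs = b)
    (hx0 : ∃ z : Fin m → ℝ, x0 - xs = (Aᵀ).mulVec z)
    (i0 : Fin t)
    (hmax : ∀ i, ∑ r ∈ V i, (b r - A.mulVec x0 r) ^ 2
              ≤ ∑ r ∈ V i0, (b r - A.mulVec x0 r) ^ 2)
    (P : Matrix (Fin n) {j // j ∈ V i0} ℝ)
    (hP1 : rowSub A V i0 * P * rowSub A V i0 = rowSub A V i0)
    (hP2 : P * rowSub A V i0 * P = P)
    (hP3 : (rowSub A V i0 * P)ᵀ = rowSub A V i0 * P)
    (hP4 : (P * rowSub A V i0)ᵀ = P * rowSub A V i0)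
    (hup : x1 = x0 + P.mulVec ((fun j => b j.1) - (rowSub A V i0).mulVec x0)) :
    ∑ l, (x1 l - xs l) ^ 2
      ≤ (1 - sigmaMinSq A / (β * t)) * ∑ l, (x0 l - xs l) ^ 2 := by
  classical
  set B := rowSub A V i0 with hBdef
  set Q := P * B with hQdef
  set e : Fin n → ℝ := x0 - xs with hedef
  have hel : ∀ l, e l = x0 l - xs l := fun l => rfl
  -- sums of squares are dot products
  have sumSq : ∀ {k : ℕ} (v : Fin k → ℝ), ∑ l, (v l) ^ 2 = v ⬝ᵥ v := by
    intro k v; simp [dotProduct, sq]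
  -- matrix identities
  have hQQ : Q * Q = Q := by
    rw [hQdef, Matrix.mul_assoc P B (P * B), ← Matrix.mul_assoc B P B, hP1]
  have hBQ : B * Q = B := by
    rw [hQdef, ← Matrix.mul_assoc, hP1]
  have hQT : Qᵀ = Q := hP4
  -- rowSub applied as mulVec
  have hBmul : ∀ (u : Fin n → ℝ) (j : {j // j ∈ V i0}),
      B.mulVec u j = A.mulVec u j.1 := by
    intro u j
    simp [hBdef, rowSub, Matrix.mulVec, Matrix.submatrix, dotProduct]
  -- x1 - xs = e - Q e
  have hAe : A.mulVec e = A.mulVec x0 - A.mulVec xs := by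
    show A.mulVec (x0 - xs) = _
    rw [Matrix.mulVec_sub]
  have hx1 : ∀ l, x1 l - xs l = (e - Q.mulVec e) l := by
    intro l
    have hres : ((fun j : {j // j ∈ V i0} => b j.1) - B.mulVec x0)
        = B.mulVec (-e) := by
      funext j
      have h2 := hBmul x0 j
      have h3 := hBmul (-e) j
      simp only [Pi.sub_apply]
      rw [h3, h2, ← hb, Matrix.mulVec_neg, Pi.neg_apply, hAe, Pi.sub_apply]
      ring
    rw [hup, hres]
    simp only [Pi.add_apply, Pi.sub_apply]
    rw [Matrix.mulVec_neg, Matrix.mulVec_neg, Matrix.mulVec_mulVec, ← hQdef]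
    simp only [Pi.neg_apply]
    have : e l = x0 l - xs l := rfl
    rw [this]
    ring
  -- key dot product identity: Qe ⬝ Qe = e ⬝ Qe
  have hQeQe : (Q.mulVec e) ⬝ᵥ (Q.mulVec e) = e ⬝ᵥ (Q.mulVec e) := by
    rw [Matrix.dotProduct_mulVec, ← Matrix.mulVec_transpose, hQT,
      Matrix.mulVec_mulVec, hQQ, dotProduct_comm]
  -- LHS = e⬝e - Qe⬝Qe
  have expand : ∀ u v : Fin n → ℝ,
      (u - v) ⬝ᵥ (u - v) = u ⬝ᵥ u - 2 * (u ⬝ᵥ v) + v ⬝ᵥ v := by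
    intro u v
    rw [sub_dotProduct, dotProduct_sub, dotProduct_sub,
      dotProduct_comm v u]
    ring
  have hLHS : ∑ l, (x1 l - xs l) ^ 2 = e ⬝ᵥ e - (Q.mulVec e) ⬝ᵥ (Q.mulVec e) := by
    have h0 : ∑ l, (x1 l - xs l) ^ 2 = (e - Q.mulVec e) ⬝ᵥ (e - Q.mulVec e) := by
      rw [← sumSq]
      exact Finset.sum_congr rfl fun l _ => by rw [hx1 l]
    rw [h0, expand e (Q.mulVec e), ← hQeQe]
    ring
  -- block sums as dot products
  have hblockdp : ∀ u : Fin n → ℝ,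
      ∑ r ∈ V i0, (A.mulVec u r) ^ 2 = (B.mulVec u) ⬝ᵥ (B.mulVec u) := by
    intro u
    rw [dotProduct]
    rw [← Finset.sum_coe_sort (V i0) (fun r => (A.mulVec u r) ^ 2)]
    exact Finset.sum_congr rfl fun j _ => by rw [hBmul u j]; ring
  -- B (Q e) = B e
  have hBQe : B.mulVec (Q.mulVec e) = B.mulVec e := by
    rw [Matrix.mulVec_mulVec, hBQ]
  -- residual rewrite
  have hres : ∀ r, (b r - A.mulVec x0 r) ^ 2 = (A.mulVec e r) ^ 2 := by
    intro r
    have : b r - A.mulVec x0 r = -(A.mulVec e r) := by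
      rw [← hb]
      have : A.mulVec e = A.mulVec x0 - A.mulVec xs := by
        rw [hedef, Matrix.mulVec_sub]
      rw [this]; simp
    rw [this]; ring
  -- total = sum of blocks
  have hsplit : ∑ r, (A.mulVec e r) ^ 2 = ∑ i, ∑ r ∈ V i, (A.mulVec e r) ^ 2 := by
    have huniv : (Finset.univ : Finset (Fin m)) = Finset.univ.biUnion V := by
      ext r
      simp only [Finset.mem_univ, Finset.mem_biUnion, true_iff, true_and]
      exact hcover r
    rw [huniv, Finset.sum_biUnion]
    intro i _ j _ hij
    exact hdisj hij
  -- main chain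
  have hAee : ∑ r, (A.mulVec e r) ^ 2 ≤ (t : ℝ) * ∑ r ∈ V i0, (A.mulVec e r) ^ 2 := by
    rw [hsplit]
    calc ∑ i, ∑ r ∈ V i, (A.mulVec e r) ^ 2
        ≤ ∑ _i : Fin t, ∑ r ∈ V i0, (A.mulVec e r) ^ 2 := by
          apply Finset.sum_le_sum
          intro i _
          have h1 := hmax i
          simp only [hres] at h1
          exact h1
      _ = (t : ℝ) * ∑ r ∈ V i0, (A.mulVec e r) ^ 2 := by
          rw [Finset.sum_const, Finset.card_univ, Fintype.card_fin, nsmul_eq_mul]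
  have hblockQ : ∑ r ∈ V i0, (A.mulVec e r) ^ 2 ≤ β * ((Q.mulVec e) ⬝ᵥ (Q.mulVec e)) := by
    have h1 := hβ i0 (Q.mulVec e)
    rw [hblockdp, hBQe, ← hblockdp] at h1
    rw [sumSq] at h1
    exact h1
  -- case split on e = 0
  have dnn : ∀ {k : ℕ} (v : Fin k → ℝ), (0:ℝ) ≤ v ⬝ᵥ v := by
    intro k v; rw [← sumSq]; positivity
  have helx : ∀ l, x0 l - xs l = e l := fun l => rfl
  have hx0sum : ∑ l, (x0 l - xs l) ^ 2 = e ⬝ᵥ e := by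
    simp only [helx]; exact sumSq e
  clear_value B Q e
  by_cases he0 : e = 0
  · have h1 : ∑ l, (x0 l - xs l) ^ 2 = 0 := by
      rw [hx0sum, he0]; simp [dotProduct]
    have h2 : ∑ l, (x1 l - xs l) ^ 2 = 0 := by
      rw [hLHS, he0]; simp [dotProduct]
    rw [h1, h2]; simp
  · -- e ≠ 0 case
    have hee : (0:ℝ) < e ⬝ᵥ e := by
      rcases lt_or_eq_of_le (dnn e) with h | h
      · exact h
      · exact absurd (dotProduct_self_eq_zero.mp h.symm) he0
    obtain ⟨z, hz⟩ := hx0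
    have hez : e = (Aᵀ).mulVec z := hz
    -- A e ≠ 0
    have hAe0 : A.mulVec e ≠ 0 := by
      intro h
      have : e ⬝ᵥ e = (A.mulVec e) ⬝ᵥ z := by
        nth_rewrite 2 [hez]
        rw [Matrix.dotProduct_mulVec, ← Matrix.mulVec_transpose, Matrix.transpose_transpose]
      rw [h, zero_dotProduct] at this
      exact absurd this (ne_of_gt hee)
    have hAee_pos : (0:ℝ) < ∑ r, (A.mulVec e r) ^ 2 := by
      rw [sumSq]
      rcases lt_or_eq_of_le (dnn (A.mulVec e)) with h | h
      · exact h
      · exact absurd (dotProduct_self_eq_zero.mp h.symm) hAe0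
    -- σ bound
    have hσ : sigmaMinSq A * (e ⬝ᵥ e) ≤ ∑ r, (A.mulVec e r) ^ 2 := by
      have hmem : (∑ r, (A.mulVec e r) ^ 2) / (e ⬝ᵥ e) ∈
          {c | ∃ w : Fin m → ℝ, (Aᵀ).mulVec w ≠ 0 ∧
            c = (∑ i, (A.mulVec ((Aᵀ).mulVec w) i) ^ 2) / (∑ l, ((Aᵀ).mulVec w l) ^ 2)} := by
        refine ⟨z, ?_, ?_⟩
        · rw [← hez]; exact he0
        · rw [← hez, sumSq e]
      have hbdd : BddBelow {c | ∃ w : Fin m → ℝ, (Aᵀ).mulVec w ≠ 0 ∧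
          c = (∑ i, (A.mulVec ((Aᵀ).mulVec w) i) ^ 2) / (∑ l, ((Aᵀ).mulVec w l) ^ 2)} := by
        refine ⟨0, fun c hc => ?_⟩
        obtain ⟨w, _, hcw⟩ := hc
        rw [hcw]
        apply div_nonneg <;> positivity
      have h1 : sigmaMinSq A ≤ (∑ r, (A.mulVec e r) ^ 2) / (e ⬝ᵥ e) :=
        csInf_le hbdd hmem
      calc sigmaMinSq A * (e ⬝ᵥ e) ≤ ((∑ r, (A.mulVec e r) ^ 2) / (e ⬝ᵥ e)) * (e ⬝ᵥ e) := by
            exact mul_le_mul_of_nonneg_right h1 (le_of_lt hee)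
        _ = ∑ r, (A.mulVec e r) ^ 2 := div_mul_cancel₀ _ (ne_of_gt hee)
    -- positivity of block and β
    have htpos : (0:ℝ) < (t:ℝ) := by exact_mod_cast ht
    have hblock_pos : (0:ℝ) < ∑ r ∈ V i0, (A.mulVec e r) ^ 2 := by
      nlinarith [hAee, hAee_pos, htpos]
    have hq_nonneg : (0:ℝ) ≤ (Q.mulVec e) ⬝ᵥ (Q.mulVec e) := dnn _
    have hβpos : (0:ℝ) < β := by
      by_contra h
      push_neg at h
      nlinarith [hblockQ, hblock_pos, hq_nonneg, mul_nonneg (neg_nonneg.mpr h) hq_nonneg]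
    -- final
    rw [hLHS, hx0sum]
    have hkey : sigmaMinSq A / (β * t) * (e ⬝ᵥ e) ≤ (Q.mulVec e) ⬝ᵥ (Q.mulVec e) := by
      rw [div_mul_eq_mul_div, div_le_iff₀ (by positivity)]
      calc sigmaMinSq A * (e ⬝ᵥ e) ≤ ∑ r, (A.mulVec e r) ^ 2 := hσ
        _ ≤ (t:ℝ) * ∑ r ∈ V i0, (A.mulVec e r) ^ 2 := hAee
        _ ≤ (t:ℝ) * (β * ((Q.mulVec e) ⬝ᵥ (Q.mulVec e))) := by
            exact mul_le_mul_of_nonneg_left hblockQ (le_of_lt htpos)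
        _ = (Q.mulVec e) ⬝ᵥ (Q.mulVec e) * (β * t) := by ring
    have hexp : (1 - sigmaMinSq A / (β * t)) * (e ⬝ᵥ e)
        = e ⬝ᵥ e - sigmaMinSq A / (β * t) * (e ⬝ᵥ e) := by ring
    rw [hexp]
    linarith [hkey]
end

section
/- (MRABK one-step identity) Let r = b_V - A_V x_k with A_V x_* = b_V, let α = ω ‖r‖₂² ‖A_V‖_F² / ‖A_Vᵀ r‖₂², and set x_{k+1} = x_k + α A_Vᵀ r / ‖A_V‖_F². Then ‖x_{k+1} - x_*‖₂² = ‖x_k - x_*‖₂² - (2ω - ω²) ‖r‖₂⁴ / ‖A_Vᵀ r‖₂², provided A_Vᵀ r ≠ 0. -/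
open Matrix

/-- MRABK one-step identity. With `r = b_V - A_V x_k`,
`A_V x_* = b_V`, `α = ω ‖r‖₂² ‖A_V‖_F² / ‖A_Vᵀ r‖₂²`, and
`x_{k+1} = x_k + (α/‖A_V‖_F²) A_Vᵀ r`, one has
`‖x_{k+1} - x_*‖₂² = ‖x_k - x_*‖₂² - (2ω - ω²) ‖r‖₂⁴ / ‖A_Vᵀ r‖₂²`,
provided `A_Vᵀ r ≠ 0`. Here `B` plays the role of `A_V`. -/
theorem mrabk_step_identity {p n : ℕ}
    (B : Matrix (Fin p) (Fin n) ℝ) (bV : Fin p → ℝ)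
    (xs xk xk1 : Fin n → ℝ) (ω α : ℝ) (r : Fin p → ℝ)
    (hxs : B.mulVec xs = bV)
    (hr : r = bV - B.mulVec xk)
    (hrne : (Bᵀ).mulVec r ≠ 0)
    (hα : α = ω * (∑ i, r i ^ 2) * (∑ i, ∑ j, B i j ^ 2)
            / (∑ j, ((Bᵀ).mulVec r j) ^ 2))
    (hup : xk1 = xk + (α / ∑ i, ∑ j, B i j ^ 2) • (Bᵀ).mulVec r) :
    ∑ l, (xk1 l - xs l) ^ 2
      = ∑ l, (xk l - xs l) ^ 2
        - (2 * ω - ω ^ 2) * (∑ i, r i ^ 2) ^ 2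
            / (∑ j, ((Bᵀ).mulVec r j) ^ 2) := by
  set t : Fin n → ℝ := (Bᵀ).mulVec r with ht
  set S : ℝ := ∑ j, t j ^ 2 with hS
  set R : ℝ := ∑ i, r i ^ 2 with hR
  set F : ℝ := ∑ i, ∑ j, B i j ^ 2 with hF
  have hSpos : 0 < S := by
    obtain ⟨j, hj⟩ := Function.ne_iff.mp hrne
    exact Finset.sum_pos' (fun i _ => sq_nonneg _)
      ⟨j, Finset.mem_univ j, by
        simp only [Pi.zero_apply] at hj; positivity⟩
  have hSne : S ≠ 0 := ne_of_gt hSpos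
  have hFne : F ≠ 0 := by
    intro h
    apply hrne
    have hB : ∀ i j, B i j = 0 := by
      intro i j
      have h1 : ∀ i ∈ Finset.univ, (∑ j, B i j ^ 2) = 0 :=
        (Finset.sum_eq_zero_iff_of_nonneg
          (fun i _ => Finset.sum_nonneg fun j _ => sq_nonneg _)).mp h
      have h2 : ∀ j ∈ Finset.univ, B i j ^ 2 = 0 :=
        (Finset.sum_eq_zero_iff_of_nonneg (fun j _ => sq_nonneg _)).mp
          (h1 i (Finset.mem_univ i))
      exact pow_eq_zero_iff (by norm_num) |>.mp (h2 j (Finset.mem_univ j))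
    funext j
    simp [ht, Matrix.mulVec, dotProduct, Matrix.transpose_apply, hB]
  -- key inner product
  have hBe : ∀ i, B.mulVec (fun l => xk l - xs l) i = - r i := by
    intro i
    have : B.mulVec (fun l => xk l - xs l) i
        = B.mulVec xk i - B.mulVec xs i := by
      simp [Matrix.mulVec, dotProduct, mul_sub, Finset.sum_sub_distrib]
    rw [this, hxs, hr]
    simp
  have key : ∑ l, t l * (xk l - xs l) = - R := by
    have : ∑ l, t l * (xk l - xs l)
        = ∑ i, r i * B.mulVec (fun l => xk l - xs l) i := by
      simp only [ht, Matrix.mulVec, dotProduct, Matrix.transpose_apply,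
        Finset.sum_mul, Finset.mul_sum]
      rw [Finset.sum_comm]
      congr 1; funext i; congr 1; funext l; ring
    rw [this]
    simp only [hBe, hR]
    rw [← Finset.sum_neg_distrib]
    congr 1; funext i; ring
  -- expand the square
  have hc : α / F = ω * R / S := by
    rw [hα]; field_simp
  have expand : ∑ l, (xk1 l - xs l) ^ 2
      = (∑ l, (xk l - xs l) ^ 2) + 2 * (α / F) * (∑ l, t l * (xk l - xs l))
        + (α / F) ^ 2 * S := by
    rw [hup]
    simp only [Pi.add_apply, Pi.smul_apply, smul_eq_mul, hS]
    rw [Finset.mul_sum, Finset.mul_sum, ← Finset.sum_add_distrib,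
      ← Finset.sum_add_distrib]
    congr 1; funext l; ring
  rw [expand, key, hc]
  field_simp
  ring
end

section
/- (MRABK one-step contraction) With r = b_V - A_V x_k ≠ 0, A_V x_* = b_V, 0 < ω < 2, σ_max(A_V)² ≤ β, and x_{k+1} = x_k + α A_Vᵀ r / ‖A_V‖_F² where α = ω ‖r‖₂² ‖A_V‖_F² / ‖A_Vᵀ r‖₂², we have ‖x_{k+1} - x_*‖₂² ≤ ‖x_k - x_*‖₂² - (2ω - ω²) ‖r‖₂² / β. -/
open Matrix

private lemma sum_sq_pos_of_ne_zero {k : ℕ} {f : Fin k → ℝ} (hf : f ≠ 0) :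
    0 < ∑ i, f i ^ 2 := by
  by_contra h
  push_neg at h
  have h0 : ∑ i, f i ^ 2 = 0 :=
    le_antisymm h (Finset.sum_nonneg fun i _ => sq_nonneg _)
  apply hf
  funext i
  have := (Finset.sum_eq_zero_iff_of_nonneg
    (fun i _ => sq_nonneg (f i))).mp h0 i (Finset.mem_univ i)
  show f i = 0
  nlinarith [sq_nonneg (f i)]

private lemma adj_sum {p n : ℕ} (B : Matrix (Fin p) (Fin n) ℝ)
    (u : Fin n → ℝ) (r : Fin p → ℝ) :
    ∑ l, u l * (Bᵀ.mulVec r) l = ∑ i, (B.mulVec u) i * r i := by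
  simp only [Matrix.mulVec, dotProduct, Matrix.transpose_apply,
    Finset.mul_sum, Finset.sum_mul]
  rw [Finset.sum_comm]
  congr 1; ext i; congr 1; ext l; ring

/-- MRABK one-step contraction. With `r = b_V - A_V x_k ≠ 0`,
`A_V x_* = b_V`, `0 < ω < 2`, `σ_max(A_V)² ≤ β` (stated as
`‖A_V u‖₂² ≤ β ‖u‖₂²` for all `u`), and the MRABK update, we have
`‖x_{k+1} - x_*‖₂² ≤ ‖x_k - x_*‖₂² - (2ω - ω²) ‖r‖₂² / β`.
Here `B` plays the role of `A_V`. -/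
theorem mrabk_step_contraction {p n : ℕ}
    (B : Matrix (Fin p) (Fin n) ℝ) (bV : Fin p → ℝ)
    (xs xk xk1 : Fin n → ℝ) (ω α β : ℝ)
    (hω1 : 0 < ω) (hω2 : ω < 2)
    (hβ : ∀ u : Fin n → ℝ, ∑ i, (B.mulVec u i) ^ 2 ≤ β * ∑ l, (u l) ^ 2)
    (r : Fin p → ℝ)
    (hxs : B.mulVec xs = bV)
    (hr : r = bV - B.mulVec xk) (hr0 : r ≠ 0)
    (hrne : (Bᵀ).mulVec r ≠ 0)
    (hα : α = ω * (∑ i, r i ^ 2) * (∑ i, ∑ j, B i j ^ 2)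
            / (∑ j, ((Bᵀ).mulVec r j) ^ 2))
    (hup : xk1 = xk + (α / ∑ i, ∑ j, B i j ^ 2) • (Bᵀ).mulVec r) :
    ∑ l, (xk1 l - xs l) ^ 2
      ≤ ∑ l, (xk l - xs l) ^ 2 - (2 * ω - ω ^ 2) * (∑ i, r i ^ 2) / β := by
  set v : Fin n → ℝ := (Bᵀ).mulVec r with hv
  set R : ℝ := ∑ i, r i ^ 2 with hR
  set T : ℝ := ∑ j, v j ^ 2 with hT
  set F : ℝ := ∑ i, ∑ j, B i j ^ 2 with hF
  have hRpos : 0 < R := sum_sq_pos_of_ne_zero hr0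
  have hTpos : 0 < T := sum_sq_pos_of_ne_zero hrne
  -- F ≠ 0
  have hFpos : F ≠ 0 := by
    intro h0
    have hB0 : ∀ i j, B i j = 0 := by
      intro i j
      have h1 : ∀ i ∈ (Finset.univ : Finset (Fin p)), 0 ≤ ∑ j, B i j ^ 2 :=
        fun i _ => Finset.sum_nonneg fun j _ => sq_nonneg _
      have h2 := (Finset.sum_eq_zero_iff_of_nonneg h1).mp h0 i (Finset.mem_univ i)
      have h3 := (Finset.sum_eq_zero_iff_of_nonneg
        (fun j _ => sq_nonneg (B i j))).mp h2 j (Finset.mem_univ j)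
      nlinarith [sq_nonneg (B i j)]
    apply hrne
    funext j
    show (Bᵀ.mulVec r) j = 0
    simp [Matrix.mulVec, dotProduct, hB0]
  -- Be = -r where e = xk - xs
  have hBe : ∀ i, (B.mulVec (fun l => xk l - xs l)) i = -(r i) := by
    intro i
    have : B.mulVec (fun l => xk l - xs l) = B.mulVec xk - B.mulVec xs := by
      rw [← Matrix.mulVec_sub]; rfl
    rw [this, hxs]
    simp [hr]
  -- ∑ e * v = -R
  have hev : ∑ l, (xk l - xs l) * v l = -R := by
    rw [hv, adj_sum]
    simp only [hBe]
    rw [hR]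
    rw [← Finset.sum_neg_distrib]
    congr 1; ext i; ring
  -- c = ω R / T
  have hc : α / F = ω * R / T := by
    rw [hα]
    field_simp
  -- expansion
  have hexp : ∑ l, (xk1 l - xs l) ^ 2
      = ∑ l, (xk l - xs l) ^ 2 + 2 * (α / F) * (∑ l, (xk l - xs l) * v l)
        + (α / F) ^ 2 * T := by
    rw [hT, Finset.mul_sum, Finset.mul_sum, ← Finset.sum_add_distrib,
      ← Finset.sum_add_distrib]
    apply Finset.sum_congr rfl
    intro l _
    rw [hup]
    simp only [Pi.add_apply, Pi.smul_apply, smul_eq_mul]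
    ring
  rw [hexp, hev, hc]
  -- now pure arithmetic with T ≤ β R
  have hTβ : T ≤ β * R := by
    have hcs := Finset.sum_mul_sq_le_sq_mul_sq Finset.univ
      (fun i => (B.mulVec v) i) r
    have hTT : ∑ i, (B.mulVec v) i * r i = T := by
      rw [hT, ← adj_sum]
      congr 1; ext l; ring
    have hβv := hβ v
    rw [hTT] at hcs
    nlinarith [sq_nonneg T]
  have hβpos : 0 < β := by nlinarith
  have hω3 : 0 < 2 * ω - ω ^ 2 := by nlinarith
  have hRT : R / β ≤ R ^ 2 / T := by
    rw [div_le_div_iff₀ hβpos hTpos]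
    nlinarith
  have key : (2 * ω - ω ^ 2) * R / β ≤ (2 * ω - ω ^ 2) * (R ^ 2 / T) := by
    rw [mul_div_assoc]
    exact mul_le_mul_of_nonneg_left hRT hω3.le
  have lhs_eq : ∑ l, (xk l - xs l) ^ 2 + 2 * (ω * R / T) * (-R) + (ω * R / T) ^ 2 * T
      = ∑ l, (xk l - xs l) ^ 2 - (2 * ω - ω ^ 2) * (R ^ 2 / T) := by
    field_simp
    ring
  rw [lhs_eq]
  linarith
end
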